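/- The (m−1, t−1)-nucleus of the Veronese variety V_m^t (the intersection of all osculating hyperplanes) contains exactly those base points F·c_{e_0,...,e_m} for which the multinomial coefficient C(t; e_0,...,e_m) ≡ 0 mod char F. Moreover, if #F ≥ t then this nucleus is spanned by those base points. -/

import Mathlib

/-- The index set `E^t_m` of `(m+1)`-tuples of non-negative integers summing to `t`,
indexing the basis `{c_e}` of the ambient space of the Veronese variety `V_m^t`. -/
abbrev VeroIdx (m t : ℕ) : Type := {e : Fin (m + 1) → ℕ // e ∈ Finset.Nat.antidiagonalTuple (m + 1) t}

/-- The linear form, in the coordinates with respect to the basis `{c_e}`, whose kernel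
is the osculating hyperplane of the Veronese variety `V_m^t` corresponding to the
hyperplane `Σ a_i X_i = 0` of the parameter space: its `e`-th coefficient is
`C(t; e_0,…,e_m) · a_0^{e_0} ⋯ a_m^{e_m}`. -/
noncomputable def veroForm (F : Type) [Field F] (m t : ℕ) (a : Fin (m + 1) → F) :
    (VeroIdx m t → F) →ₗ[F] F :=
  ∑ e : VeroIdx m t,
    ((Nat.multinomial Finset.univ e.1 : F) * ∏ i, a i ^ e.1 i) • LinearMap.proj e

/-- The `(m−1, t−1)`-nucleus of the Veronese variety `V_m^t`: the intersection of all
its osculating hyperplanes. -/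
noncomputable def veroNucleus (F : Type) [Field F] (m t : ℕ) :
    Submodule F (VeroIdx m t → F) :=
  ⨅ (a : Fin (m + 1) → F) (_ : a ≠ 0), LinearMap.ker (veroForm F m t a)

/-!
Each osculating form `x ↦ Σ_e C(t; e) a^e x_e` is the evaluation at `a` of the polynomial
`Σ_e C(t; e) x_e X^e`, which is homogeneous of degree `t`; by homogeneity it also vanishes at
`a = 0` once it vanishes at every `a ≠ 0`. So `x` lies in the nucleus iff this polynomial
vanishes on all of `F^{m+1}`. A base point `c_e` gives the polynomial `C(t; e) X^e`, which
vanishes everywhere iff `C(t; e) = 0` in `F`. If `#F ≥ t`, a homogeneous polynomial of degree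
`t` vanishing everywhere is zero, so every coordinate `x_e` with `C(t; e) ≠ 0` of a point of
the nucleus vanishes.
-/

open MvPolynomial

section VeroneseNucleus

variable {F : Type} [Field F] {m t : ℕ}

lemma veroForm_apply (a : Fin (m + 1) → F) (x : VeroIdx m t → F) :
    veroForm F m t a x =
      ∑ e : VeroIdx m t, (Nat.multinomial Finset.univ e.1 : F) * (∏ i, a i ^ e.1 i) * x e := by
  simp [veroForm, mul_comm]

lemma veroForm_single (a : Fin (m + 1) → F) (e : VeroIdx m t) :
    veroForm F m t a (Pi.single e 1) =
      (Nat.multinomial Finset.univ e.1 : F) * ∏ i, a i ^ e.1 i := by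
  simp [veroForm_apply, Pi.single_apply]

lemma veroForm_smul (c : F) (a : Fin (m + 1) → F) (x : VeroIdx m t → F) :
    veroForm F m t (c • a) x = c ^ t * veroForm F m t a x := by
  simp only [veroForm_apply, Finset.mul_sum, Pi.smul_apply, smul_eq_mul, mul_pow,
    Finset.prod_mul_distrib, Finset.prod_pow_eq_pow_sum]
  refine Finset.sum_congr rfl fun e _ => ?_
  rw [Finset.Nat.mem_antidiagonalTuple.mp e.2]
  ring

lemma mem_veroNucleus_iff (x : VeroIdx m t → F) :
    x ∈ veroNucleus F m t ↔ ∀ a, veroForm F m t a x = 0 := by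
  simp only [veroNucleus, Submodule.mem_iInf, LinearMap.mem_ker]
  refine ⟨fun hx a => ?_, fun h a _ => h a⟩
  rcases eq_or_ne a 0 with rfl | ha
  · rw [← zero_smul F (1 : Fin (m + 1) → F), veroForm_smul, hx 1 one_ne_zero, mul_zero]
  · exact hx a ha

lemma single_mem_veroNucleus_iff (e : VeroIdx m t) :
    Pi.single e (1 : F) ∈ veroNucleus F m t ↔ (Nat.multinomial Finset.univ e.1 : F) = 0 := by
  rw [mem_veroNucleus_iff]
  refine ⟨fun h => ?_, fun hC a => by rw [veroForm_single, hC, zero_mul]⟩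
  simpa [veroForm_single] using h 1

noncomputable def veroPoly (x : VeroIdx m t → F) : MvPolynomial (Fin (m + 1)) F :=
  ∑ e : VeroIdx m t,
    monomial (Finsupp.equivFunOnFinite.symm e.1) ((Nat.multinomial Finset.univ e.1 : F) * x e)

lemma isHomogeneous_veroPoly (x : VeroIdx m t → F) : (veroPoly x).IsHomogeneous t :=
  IsHomogeneous.sum _ _ _ fun e _ => isHomogeneous_monomial _ <| by
    rw [Finsupp.degree_eq_sum]
    exact Finset.Nat.mem_antidiagonalTuple.mp e.2

lemma eval_veroPoly (a : Fin (m + 1) → F) (x : VeroIdx m t → F) :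
    eval a (veroPoly x) = veroForm F m t a x := by
  simp only [veroPoly, map_sum, eval_monomial, veroForm_apply]
  refine Finset.sum_congr rfl fun e _ => ?_
  rw [Finsupp.prod_fintype _ _ fun i => pow_zero (a i)]
  simp only [Finsupp.equivFunOnFinite_symm_apply_apply]
  ring

lemma coeff_veroPoly (x : VeroIdx m t → F) (e : VeroIdx m t) :
    coeff (Finsupp.equivFunOnFinite.symm e.1) (veroPoly x) =
      (Nat.multinomial Finset.univ e.1 : F) * x e := by
  rw [veroPoly, coeff_sum, Finset.sum_eq_single e]
  · rw [coeff_monomial, if_pos rfl]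
  · intro b _ hb
    rw [coeff_monomial,
      if_neg fun h => hb (Subtype.ext (Finsupp.equivFunOnFinite.symm.injective h))]
  · simp

lemma veroNucleus_le_span (hF : (t : Cardinal) ≤ Cardinal.mk F) :
    veroNucleus F m t ≤ Submodule.span F
      {v | ∃ e : VeroIdx m t,
        (Nat.multinomial Finset.univ e.1 : F) = 0 ∧ v = Pi.single e 1} := by
  intro x hx
  have hpoly : veroPoly x = 0 :=
    (isHomogeneous_veroPoly x).eq_zero_of_forall_eval_eq_zero_of_le_card
      (fun a => (eval_veroPoly a x).trans ((mem_veroNucleus_iff x).1 hx a)) hF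
  rw [← Finset.univ_sum_single x]
  refine Submodule.sum_mem _ fun e _ => ?_
  rcases eq_or_ne (Nat.multinomial Finset.univ e.1 : F) 0 with hC | hC
  · rw [← mul_one (x e), ← smul_eq_mul, Pi.single_smul']
    exact Submodule.smul_mem _ _ (Submodule.subset_span ⟨e, hC, rfl⟩)
  · have hxe : x e = 0 := by
      simpa [hC, hpoly] using (coeff_veroPoly x e).symm
    rw [hxe, Pi.single_zero]
    exact Submodule.zero_mem _

end VeroneseNucleus

theorem veroNucleus_base_points_general (F : Type) [Field F] (m t : ℕ) :
    (∀ e : VeroIdx m t,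
        Pi.single e (1 : F) ∈ veroNucleus F m t ↔
          (Nat.multinomial Finset.univ e.1 : F) = 0) ∧
    ((t : Cardinal) ≤ Cardinal.mk F →
      veroNucleus F m t = Submodule.span F
        {v | ∃ e : VeroIdx m t,
          (Nat.multinomial Finset.univ e.1 : F) = 0 ∧ v = Pi.single e 1}) := by
  refine ⟨single_mem_veroNucleus_iff, fun hF => (veroNucleus_le_span hF).antisymm ?_⟩
  rw [Submodule.span_le]
  rintro v ⟨e, hC, rfl⟩
  exact (single_mem_veroNucleus_iff e).2 hC

/-- The `(m−1, t−1)`-nucleus of the Veronese variety `V_m^t` contains exactly those base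
points `F·c_e` with `C(t; e_0,…,e_m) ≡ 0 mod char F` (i.e. vanishing in `F`);
moreover, if `#F ≥ t` then the nucleus is spanned by those base points. -/
theorem veroNucleus_base_points (F : Type) [Field F] (m t : ℕ) (hm : 1 ≤ m) (ht : 2 ≤ t) :
    (∀ e : VeroIdx m t,
        Pi.single e (1 : F) ∈ veroNucleus F m t ↔
          (Nat.multinomial Finset.univ e.1 : F) = 0) ∧
    ((t : Cardinal) ≤ Cardinal.mk F →
      veroNucleus F m t = Submodule.span F
        {v | ∃ e : VeroIdx m t,
          (Nat.multinomial Finset.univ e.1 : F) = 0 ∧ v = Pi.single e 1}) :=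
  veroNucleus_base_points_general F m t
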